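/- For every N ≥ 1, every optimal palindromic decomposition of the prefix of the Thue-Morse word of length 4N is a 0-decomposition: if the prefix of t of length 4N equals a concatenation p_1⋯p_k of nonempty palindromes with k = PPL_t(4N), then the length of every p_i is divisible by 4 (equivalently, every palindrome in the factorization starts and ends at a position divisible by 4). -/

import Mathlib

/-- The Thue–Morse word: `tm n` is the number of ones (sum of binary digits)
in the binary expansion of `n`, taken mod 2. -/
def tm (n : ℕ) : ℕ := (Nat.digits 2 n).sum % 2

/-- `ps` is a factorization of the finite word `w` into nonempty palindromes. -/
def IsPalDecomp (w : List ℕ) (ps : List (List ℕ)) : Prop :=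
  ps.flatten = w ∧ ∀ p ∈ ps, p ≠ [] ∧ p.Palindrome

/-- The palindromic length of a finite word: the least number of nonempty
palindromes whose concatenation is the word (0 for the empty word). -/
noncomputable def palLen (w : List ℕ) : ℕ :=
  sInf {k | ∃ ps, ps.length = k ∧ IsPalDecomp w ps}

/-- `pplTM n` is the palindromic length of the prefix of length `n`
of the Thue–Morse word. -/
noncomputable def pplTM (n : ℕ) : ℕ := palLen ((List.range n).map tm)

/-!
Cut the prefix of length `4N` at the boundaries of the palindromes of a decomposition and move
every cut `c` to a multiple of 4 at distance at most 2 (for `c ≡ 2 mod 4` either neighbour).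
Palindromes in the Thue–Morse word have length 1 or 3 (and length 3 only from a position
`≡ 2, 3 mod 4`) or even length with centre at a multiple of 4 — where the reflection maps
blocks `t[4n, 4n + 4)` onto blocks. Hence the rounded cuts of a palindrome bound a palindrome
again, or coincide, or (odd length after a cut rounded down from `≡ 2`) bound a single block.
The first piece that leads from a cut `≡ 0` to a cut `≢ 0 mod 4` has length 1 and its rounded
cuts coincide, so a decomposition that is not a 0-decomposition is never optimal.
-/

section Factor

variable {α : Type*} (w : ℕ → α)

def factor (i j : ℕ) : List α := (List.range' i (j - i)).map w

def IsPalFactor (i j : ℕ) : Prop := ∀ x, i ≤ x → x < j → w x = w (i + j - 1 - x)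

variable {w}

@[simp]
theorem length_factor (i j : ℕ) : (factor w i j).length = j - i := by simp [factor]

theorem factor_append {i j k : ℕ} (hij : i ≤ j) (hjk : j ≤ k) :
    factor w i j ++ factor w j k = factor w i k := by
  have h := @List.range'_append i (j - i) (k - j) 1
  rw [one_mul, Nat.add_sub_cancel' hij, show j - i + (k - j) = k - i by omega] at h
  simp only [factor, ← List.map_append, h]

theorem eq_factor_of_append_eq {q r : List α} {i k : ℕ} (hik : i ≤ k)
    (h : q ++ r = factor w i k) :
    i + q.length ≤ k ∧ q = factor w i (i + q.length) ∧ r = factor w (i + q.length) k := by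
  have hle : i + q.length ≤ k := by
    have := congrArg List.length h
    simp only [List.length_append, length_factor] at this
    omega
  rw [← factor_append (Nat.le_add_right i q.length) hle] at h
  exact ⟨hle, List.append_inj h (by simp)⟩

theorem palindrome_factor_iff {i j : ℕ} : (factor w i j).Palindrome ↔ IsPalFactor w i j := by
  rw [List.Palindrome.iff_reverse_eq, List.ext_getElem_iff]
  simp only [factor, List.length_reverse, List.length_map, List.length_range',
    List.getElem_reverse, List.getElem_map, List.getElem_range', true_and, one_mul]
  constructor
  · intro h x hix hxj
    have := h (j - 1 - x) (by omega) (by omega)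
    rwa [show i + (j - i - 1 - (j - 1 - x)) = x by omega,
      show i + (j - 1 - x) = i + j - 1 - x by omega] at this
  · intro h k hk _
    rw [h (i + k) (by omega) (by omega), show i + (j - i - 1 - k) = i + j - 1 - (i + k) by omega]

theorem IsPalFactor.trim {i j i' j' : ℕ} (h : IsPalFactor w i j) (hi : i ≤ i')
    (hsum : i' + j' = i + j) : IsPalFactor w i' j' := fun x hx hx' ↦ by
  rw [hsum]; exact h x (by omega) (by omega)

end Factor

theorem IsPalDecomp.nil : IsPalDecomp [] [] := ⟨rfl, by simp⟩

theorem IsPalDecomp.cons {p w : List ℕ} {ps : List (List ℕ)} (hp : p ≠ []) (hpal : p.Palindrome)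
    (h : IsPalDecomp w ps) : IsPalDecomp (p ++ w) (p :: ps) :=
  ⟨by rw [List.flatten_cons, h.1], List.forall_mem_cons.2 ⟨⟨hp, hpal⟩, h.2⟩⟩

theorem palLen_le {w : List ℕ} {ps : List (List ℕ)} (h : IsPalDecomp w ps) :
    palLen w ≤ ps.length :=
  Nat.sInf_le ⟨ps, rfl, h⟩

theorem tm_le_one (n : ℕ) : tm n ≤ 1 := Nat.lt_succ_iff.mp (Nat.mod_lt _ two_pos)

theorem tm_two_mul (n : ℕ) : tm (2 * n) = tm n := by
  rcases Nat.eq_zero_or_pos n with rfl | hn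
  · rfl
  · rw [tm, Nat.digits_def' one_lt_two (by omega), Nat.mul_mod_right,
      Nat.mul_div_cancel_left n two_pos, List.sum_cons, zero_add, tm]

theorem tm_two_mul_add_one (n : ℕ) : tm (2 * n + 1) = 1 - tm n := by
  rw [tm, Nat.digits_def' one_lt_two (by omega), List.sum_cons,
    show (2 * n + 1) % 2 = 1 by omega, show (2 * n + 1) / 2 = n by omega, tm]
  omega

theorem tm_two_mul_add_one_ne (n : ℕ) : tm (2 * n + 1) ≠ tm (2 * n) := by
  rw [tm_two_mul_add_one, tm_two_mul]
  have := tm_le_one n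
  omega

theorem odd_of_tm_eq_tm_succ {m : ℕ} (h : tm m = tm (m + 1)) : m % 2 = 1 := by
  by_contra hm
  obtain ⟨k, rfl⟩ : ∃ k, m = 2 * k := ⟨m / 2, by omega⟩
  exact tm_two_mul_add_one_ne k h.symm

theorem not_tm_eq_tm_succ_and_tm_succ_eq (n : ℕ) :
    ¬ (tm n = tm (n + 1) ∧ tm (n + 1) = tm (n + 2)) := fun ⟨h₁, h₂⟩ ↦ by
  have := odd_of_tm_eq_tm_succ h₁
  have := odd_of_tm_eq_tm_succ h₂
  omega

theorem tm_four_mul (n : ℕ) : tm (4 * n) = tm n := by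
  rw [show 4 * n = 2 * (2 * n) by ring, tm_two_mul, tm_two_mul]

theorem tm_four_mul_add_one (n : ℕ) : tm (4 * n + 1) = 1 - tm n := by
  rw [show 4 * n + 1 = 2 * (2 * n) + 1 by ring, tm_two_mul_add_one, tm_two_mul]

theorem tm_four_mul_add_two (n : ℕ) : tm (4 * n + 2) = 1 - tm n := by
  rw [show 4 * n + 2 = 2 * (2 * n + 1) by ring, tm_two_mul, tm_two_mul_add_one]

theorem tm_four_mul_add_three (n : ℕ) : tm (4 * n + 3) = tm n := by
  rw [show 4 * n + 3 = 2 * (2 * n + 1) + 1 by ring, tm_two_mul_add_one, tm_two_mul_add_one]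
  have := tm_le_one n
  omega

theorem tm_four_mul_add_eq_iff {m n i : ℕ} (hi : i < 4) :
    tm (4 * m + i) = tm (4 * n + i) ↔ tm m = tm n := by
  have := tm_le_one m
  have := tm_le_one n
  interval_cases i <;>
    simp only [add_zero, tm_four_mul, tm_four_mul_add_one, tm_four_mul_add_two,
      tm_four_mul_add_three] <;> omega

theorem tm_four_mul_add_sub {n i : ℕ} (hi : i < 4) : tm (4 * n + (3 - i)) = tm (4 * n + i) := by
  interval_cases i <;>
    simp only [Nat.sub_zero, Nat.sub_self, add_zero, tm_four_mul, tm_four_mul_add_one,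
      tm_four_mul_add_two, tm_four_mul_add_three]

theorem not_isPalFactor_tm_five (j : ℕ) : ¬ IsPalFactor tm j (j + 5) := fun h ↦ by
  have h₀ := h j le_rfl (by omega)
  have h₁ := h (j + 1) (by omega) (by omega)
  rw [show j + (j + 5) - 1 - j = j + 4 by omega] at h₀
  rw [show j + (j + 5) - 1 - (j + 1) = j + 3 by omega] at h₁
  obtain ⟨p, rfl | rfl⟩ : ∃ p, j = 2 * p ∨ j = 2 * p + 1 := ⟨j / 2, by omega⟩
  · rw [show 2 * p + 4 = 2 * (p + 2) by ring, tm_two_mul, tm_two_mul] at h₀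
    rw [show 2 * p + 3 = 2 * (p + 1) + 1 by ring, tm_two_mul_add_one,
      tm_two_mul_add_one] at h₁
    have := tm_le_one p
    have := tm_le_one (p + 1)
    exact not_tm_eq_tm_succ_and_tm_succ_eq p ⟨by omega, by omega⟩
  · rw [show 2 * p + 1 + 4 = 2 * (p + 2) + 1 by ring, tm_two_mul_add_one,
      tm_two_mul_add_one] at h₀
    rw [show 2 * p + 1 + 1 = 2 * (p + 1) by ring, show 2 * p + 1 + 3 = 2 * (p + 2) by ring,
      tm_two_mul, tm_two_mul] at h₁
    have := tm_le_one p
    have := tm_le_one (p + 2)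
    exact not_tm_eq_tm_succ_and_tm_succ_eq p ⟨by omega, h₁⟩

theorem IsPalFactor.tm_le_add_three_of_odd {u v : ℕ} (h : IsPalFactor tm u v)
    (hodd : (v - u) % 2 = 1) : v ≤ u + 3 := by
  by_contra! hv
  exact not_isPalFactor_tm_five ((u + v - 5) / 2) (h.trim (by omega) (by omega))

theorem IsPalFactor.tm_two_le_mod_four {u : ℕ} (h : IsPalFactor tm u (u + 3)) :
    2 ≤ u % 4 := by
  have h₀ := h u le_rfl (by omega)
  rw [show u + (u + 3) - 1 - u = u + 2 by omega] at h₀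
  obtain ⟨n, r, hr, rfl⟩ : ∃ n r, r < 4 ∧ u = 4 * n + r := ⟨u / 4, u % 4, by omega, by omega⟩
  have := tm_le_one n
  interval_cases r
  · rw [add_zero, tm_four_mul, tm_four_mul_add_two] at h₀; omega
  · rw [tm_four_mul_add_one, tm_four_mul_add_three] at h₀; omega
  · omega
  · omega

theorem IsPalFactor.tm_add_mod_four_eq_zero {u v : ℕ} (h : IsPalFactor tm u v) (huv : u < v)
    (heven : (v - u) % 2 = 0) : (u + v) % 4 = 0 := by
  have hc := h ((u + v) / 2 - 1) (by omega) (by omega)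
  rw [show u + v - 1 - ((u + v) / 2 - 1) = (u + v) / 2 - 1 + 1 by omega] at hc
  have := odd_of_tm_eq_tm_succ hc
  omega

theorem isPalFactor_tm_four_mul (n : ℕ) : IsPalFactor tm (4 * n) (4 * n + 4) := by
  intro x hx hx'
  obtain ⟨i, hi, rfl⟩ : ∃ i, i < 4 ∧ x = 4 * n + i := ⟨x - 4 * n, by omega, by omega⟩
  rw [show 4 * n + (4 * n + 4) - 1 - (4 * n + i) = 4 * n + (3 - i) by omega,
    tm_four_mul_add_sub hi]

/-- Reflection about a multiple of 4 maps each block `t[4n, 4n + 4)` onto a block, reversed, and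
blocks are palindromes; so whether a position matches its mirror image depends only on its block. -/
theorem tm_mirror_eq_iff {C x : ℕ} (hC : C % 4 = 0) (hx : x < C) :
    tm (C - 1 - x) = tm x ↔ tm (C / 4 - 1 - x / 4) = tm (x / 4) := by
  have hi : x % 4 < 4 := Nat.mod_lt x (by norm_num)
  rw [show C - 1 - x = 4 * (C / 4 - 1 - x / 4) + (3 - x % 4) by omega, tm_four_mul_add_sub hi]
  simpa only [Nat.div_add_mod] using
    tm_four_mul_add_eq_iff (m := C / 4 - 1 - x / 4) (n := x / 4) hi

theorem IsPalFactor.tm_hull {u v a : ℕ} (h : IsPalFactor tm u v) (huv : u < v)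
    (hC : (u + v) % 4 = 0) (ha : a % 4 = 0) (hau : a ≤ u) (hua : u < a + 4) :
    IsPalFactor tm a (u + v - a) := fun x hx hx' ↦ by
  obtain ⟨y, hy, hy', hxy⟩ : ∃ y, u ≤ y ∧ y < v ∧ y / 4 = x / 4 :=
    ⟨max u (min x (v - 1)), by omega, by omega, by omega⟩
  rw [show a + (u + v - a) = u + v by omega, eq_comm, tm_mirror_eq_iff hC (by omega), ← hxy,
    ← tm_mirror_eq_iff hC (by omega)]
  exact (h y hy hy').symm

/-- `a` is a way to round the cut `c` to a block boundary; for `c ≡ 2 mod 4` there are two. -/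
def IsRounding (c a : ℕ) : Prop := a % 4 = 0 ∧ c ≤ a + 2 ∧ a ≤ c + 2

theorem exists_isRounding_isPalFactor_tm {u v a : ℕ} (huv : u < v) (h : IsPalFactor tm u v)
    (ha : IsRounding u a) :
    ∃ b, IsRounding v b ∧ a ≤ b ∧ IsPalFactor tm a b ∧ (u % 4 = 0 → v % 4 ≠ 0 → b = a) := by
  unfold IsRounding at *
  by_cases heven : (v - u) % 2 = 0
  · -- the centre is a block boundary: reflect the rounding of `u`; the hull of the piece, trimmed
    have hC := h.tm_add_mod_four_eq_zero huv heven
    refine ⟨u + v - a, by omega, by omega, ?_, by omega⟩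
    exact (h.tm_hull huv hC (a := 4 * (u / 4)) (by omega) (by omega) (by omega)).trim
      (by omega) (by omega)
  · -- the rounded cuts coincide, except after rounding `u ≡ 2` down: then the block `[a, a + 4)`
    have hv := h.tm_le_add_three_of_odd (by omega)
    have h₃ : v = u + 3 → 2 ≤ u % 4 := by
      rintro rfl
      exact h.tm_two_le_mod_four
    by_cases hb : a % 4 = 0 ∧ v ≤ a + 2 ∧ a ≤ v + 2
    · exact ⟨a, hb, le_rfl, fun x hx hx' ↦ absurd hx' (by omega), fun _ _ ↦ rfl⟩
    · refine ⟨a + 4, by omega, by omega, ?_, by omega⟩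
      obtain ⟨n, rfl⟩ : ∃ n, a = 4 * n := ⟨a / 4, by omega⟩
      exact isPalFactor_tm_four_mul n

theorem exists_isPalDecomp_of_isRounding (qs : List (List ℕ)) {u v a : ℕ} (huv : u ≤ v)
    (h : IsPalDecomp (factor tm u v) qs) (ha : IsRounding u a) :
    ∃ b rs, IsRounding v b ∧ a ≤ b ∧ IsPalDecomp (factor tm a b) rs ∧ rs.length ≤ qs.length ∧
      (u % 4 = 0 → (∃ q ∈ qs, q.length % 4 ≠ 0) → rs.length < qs.length) := by
  induction qs generalizing u a with
  | nil =>
    have hvu : v = u := by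
      have := congrArg List.length h.1
      simp only [List.flatten_nil, List.length_nil, length_factor] at this
      omega
    subst hvu
    refine ⟨a, [], ha, le_rfl, ?_, le_rfl, by simp⟩
    simpa [factor] using IsPalDecomp.nil
  | cons q t ih =>
    obtain ⟨hflat, hpal⟩ := h
    rw [List.flatten_cons] at hflat
    rw [List.forall_mem_cons] at hpal
    obtain ⟨hle, hq, ht⟩ := eq_factor_of_append_eq huv hflat
    have hlt : u < u + q.length := by
      have := List.length_pos_iff.2 hpal.1.1
      omega
    obtain ⟨b₁, hb₁, hab₁, hpal₁, hstrict₁⟩ :=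
      exists_isRounding_isPalFactor_tm hlt (palindrome_factor_iff.1 (hq ▸ hpal.1.2)) ha
    obtain ⟨b, rs, hb, hb₁b, hrs, hlen, hstrict⟩ := ih hle ⟨ht, hpal.2⟩ hb₁
    rcases hab₁.eq_or_lt with rfl | hlt₁
    · exact ⟨b, rs, hb, hb₁b, hrs, by rw [List.length_cons]; omega,
        fun _ _ ↦ by rw [List.length_cons]; omega⟩
    refine ⟨b, factor tm a b₁ :: rs, hb, by omega, ?_,
      by simp only [List.length_cons]; omega, ?_⟩
    · rw [← factor_append hab₁ hb₁b]
      refine hrs.cons ?_ (palindrome_factor_iff.2 hpal₁)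
      rw [← List.length_pos_iff, length_factor]
      omega
    · rintro hu ⟨q', hq', hq'len⟩
      have hm : (u + q.length) % 4 = 0 := by
        by_contra hm
        exact hlt₁.ne' (hstrict₁ hu hm)
      rcases List.mem_cons.1 hq' with rfl | hq't
      · omega
      · have := hstrict hm ⟨q', hq't, hq'len⟩
        simp only [List.length_cons]
        omega

theorem pplTM_4N_optimal_is_zero_decomposition_general (N : ℕ)
    (ps : List (List ℕ))
    (hdec : IsPalDecomp ((List.range (4 * N)).map tm) ps)
    (hopt : ps.length = pplTM (4 * N)) :
    ∀ p ∈ ps, p.length % 4 = 0 := by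
  by_contra! hbad
  have hprefix : (List.range (4 * N)).map tm = factor tm 0 (4 * N) := by
    simp [factor, List.range_eq_range']
  rw [hprefix] at hdec
  obtain ⟨b, rs, hb, -, hrs, -, hshorter⟩ :=
    exists_isPalDecomp_of_isRounding ps (Nat.zero_le _) hdec (a := 0) (by simp [IsRounding])
  obtain rfl : b = 4 * N := by
    unfold IsRounding at hb
    omega
  have hle := palLen_le hrs
  have hlt := hshorter rfl hbad
  rw [hopt, pplTM, hprefix] at hlt
  omega

/-- For every `N ≥ 1`, every optimal palindromic decomposition of the prefix
of the Thue–Morse word of length `4N` is a 0-decomposition: every palindrome in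
it has length divisible by 4. -/
theorem pplTM_4N_optimal_is_zero_decomposition (N : ℕ) (hN : 1 ≤ N)
    (ps : List (List ℕ))
    (hdec : IsPalDecomp ((List.range (4 * N)).map tm) ps)
    (hopt : ps.length = pplTM (4 * N)) :
    ∀ p ∈ ps, p.length % 4 = 0 :=
  pplTM_4N_optimal_is_zero_decomposition_general N ps hdec hopt
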